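/- Let S = {(Φ(x), a) ∈ K_α × A : x ∈ Frac(σ,a)} be the stepped surface and define T_ext⁻¹(γ,a) = ∪_{b →p a} {(α⁻¹·(γ + Φ(δ(p))), b)} for (γ,a) ∈ K_α × A, the union over all edges b →p a of the prefix automaton. Then S is invariant under T_ext⁻¹: (i) for every (Φ(x),a) ∈ S one has T_ext⁻¹(Φ(x),a) ⊆ S, and (ii) distinct elements of S have disjoint images: if (Φ(x₁),a₁) ≠ (Φ(x₂),a₂) are in S then T_ext⁻¹(Φ(x₁),a₁) ∩ T_ext⁻¹(Φ(x₂),a₂) = ∅. -/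

import Mathlib

/- Common setup: non-unit irreducible Pisot substitutions, following
Minervino–Thuswaldner, "The geometry of non-unit Pisot substitutions". -/

open NumberField IsDedekindDomain MeasureTheory Filter

noncomputable section

/-- A substitution (given by the images of the letters) applied to a word. -/
def subApply {n : ℕ} (word : Fin n → List (Fin n)) (w : List (Fin n)) : List (Fin n) :=
  w.flatMap word

/-- The incidence matrix of a substitution: `(M_σ)_{a,b} = |σ(b)|_a`. -/
def incMat {n : ℕ} (word : Fin n → List (Fin n)) : Matrix (Fin n) (Fin n) ℚ :=
  fun a b => ((word b).count a : ℚ)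

/-- `δ(w) = ⟨P(w), v_α⟩`, where `P` is the abelianisation map. -/
def dlt {n : ℕ} {K : Type*} [Field K] (v : Fin n → K) (w : List (Fin n)) : K :=
  ∑ a : Fin n, (w.count a : K) * v a

/-- `σ` is an irreducible Pisot substitution with associated Pisot number `α ∈ K = ℚ(α)`,
where `embℝ : K →+* ℝ` is the distinguished real embedding (the place `𝔭₁`). -/
structure IsIrrPisot {n : ℕ} {K : Type*} [Field K] [NumberField K]
    (word : Fin n → List (Fin n)) (α : K) (embℝ : K →+* ℝ) : Prop where
  npos : 0 < n
  word_ne : ∀ a, word a ≠ []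
  integral : IsIntegral ℤ α
  gen : IntermediateField.adjoin ℚ ({α} : Set K) = ⊤
  one_lt : 1 < embℝ α
  conj_lt : ∀ φ : K →+* ℂ, φ α ≠ (embℝ α : ℂ) → ‖φ α‖ < 1
  charpoly_irr : Irreducible (incMat word).charpoly
  charpoly_root : Polynomial.aeval α (incMat word).charpoly = 0

/-- `v` is a left eigenvector of the incidence matrix for the eigenvalue `α`,
with entries positive under the real embedding `𝔭₁`. -/
structure IsPisotEigenvector {n : ℕ} {K : Type*} [Field K] [NumberField K]
    (word : Fin n → List (Fin n)) (α : K) (embℝ : K →+* ℝ) (v : Fin n → K) : Prop where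
  left_eig : ∀ b, ∑ a : Fin n, ((word b).count a : K) * v a = α * v b
  pos : ∀ i, 0 < embℝ (v i)

/-- The ℤ-module `V = ⟨v₁,…,vₙ⟩_ℤ`. -/
def Vmod {n : ℕ} {K : Type*} [Field K] (v : Fin n → K) : Submodule ℤ K :=
  Submodule.span ℤ (Set.range v)

/-- The ℤ-module `V·ℤ[α⁻¹]` of finite sums `Σ xⱼ α^{−kⱼ}`, `xⱼ ∈ V`. -/
def VZmod {n : ℕ} {K : Type*} [Field K] (α : K) (v : Fin n → K) : Submodule ℤ K :=
  Submodule.span ℤ {y : K | ∃ (i : Fin n) (k : ℕ), y = v i * α⁻¹ ^ k}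

/-- `Frac(σ,a) = V·ℤ[α⁻¹] ∩ [0, δ(a))` (interval taken in `ℝ` under `𝔭₁`). -/
def fracSet {n : ℕ} {K : Type*} [Field K] (α : K) (v : Fin n → K) (embℝ : K →+* ℝ)
    (a : Fin n) : Set K :=
  {x : K | x ∈ VZmod α v ∧ 0 ≤ embℝ x ∧ embℝ x < embℝ (v a)}

variable (K : Type*) [Field K] [NumberField K]

/-- The representation space `K_σ`, the product of the completions of `K` at all places of
`S_α` other than `𝔭₁`: the real places `≠ 𝔭₁`, the complex places, and the finite primes
dividing `(α)`. -/
abbrev RepSpace (α : K) (p₁ : InfinitePlace K) : Type _ :=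
  ({w : InfinitePlace K // w.IsReal ∧ w ≠ p₁} → ℝ) ×
  ({w : InfinitePlace K // w.IsComplex} → ℂ) ×
  ((w : {w : HeightOneSpectrum (𝓞 K) // w.valuation K α < 1}) → w.1.adicCompletion K)

/-- `K_α = K_{𝔭₁} × K_σ = ℝ × K_σ`. -/
abbrev FullSpace (α : K) (p₁ : InfinitePlace K) : Type _ := ℝ × RepSpace K α p₁

/-- The diagonal embedding `Φ' : K → K_σ`. -/
def embσ (α : K) (p₁ : InfinitePlace K) : K →+* RepSpace K α p₁ :=
  (Pi.ringHom fun w => InfinitePlace.embedding_of_isReal w.2.1).prod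
    ((Pi.ringHom fun w => w.1.embedding).prod
      (Pi.ringHom fun w => algebraMap K (w.1.adicCompletion K)))

/-- The diagonal embedding `Φ : K → K_α`. -/
def embα (α : K) (p₁ : InfinitePlace K) (embℝ : K →+* ℝ) : K →+* FullSpace K α p₁ :=
  embℝ.prod (embσ K α p₁)


/-- `T_ext⁻¹` acting on `K_α × A` (used for the stepped surface). -/
def TinvFull {n : ℕ} (word : Fin n → List (Fin n)) (α : K) (v : Fin n → K)
    (p₁ : InfinitePlace K) (embℝ : K →+* ℝ) (q : FullSpace K α p₁ × Fin n) :
    Set (FullSpace K α p₁ × Fin n) :=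
  {r | ∃ p s : List (Fin n), word r.2 = p ++ q.2 :: s ∧
        r.1 = embα K α p₁ embℝ α⁻¹ * (q.1 + embα K α p₁ embℝ (dlt v p))}

/-- The stepped surface `S = {(Φ(x), a) : x ∈ Frac(σ,a)} ⊆ K_α × A`. -/
def steppedSurface {n : ℕ} (α : K) (v : Fin n → K) (p₁ : InfinitePlace K)
    (embℝ : K →+* ℝ) : Set (FullSpace K α p₁ × Fin n) :=
  {q | ∃ x ∈ fracSet α v embℝ q.2, q.1 = embα K α p₁ embℝ x}

variable {K}

/-- A uniformly discrete subset of a topological additive group. -/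
def UnifDiscrete {G : Type*} [AddGroup G] [TopologicalSpace G] (W : Set G) : Prop :=
  ∃ U ∈ nhds (0 : G), ∀ x ∈ W, ∀ y ∈ W, x ≠ y → x - y ∉ U

/-- A relatively dense subset of a topological additive group. -/
def RelDense {G : Type*} [AddGroup G] [TopologicalSpace G] (W : Set G) : Prop :=
  ∃ C : Set G, IsCompact C ∧ ∀ z : G, ∃ w ∈ W, z - w ∈ C

/-- A Delone set: uniformly discrete and relatively dense. -/
def IsDeloneSet {G : Type*} [AddGroup G] [TopologicalSpace G] (W : Set G) : Prop :=
  UnifDiscrete W ∧ RelDense W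

variable (K)

/-- The translation set `Γ = {(Φ'(x), a) : x ∈ Frac(σ,a)} ⊆ K_σ × A`. -/
def transSet {n : ℕ} (α : K) (v : Fin n → K) (p₁ : InfinitePlace K) (embℝ : K →+* ℝ) :
    Set (RepSpace K α p₁ × Fin n) :=
  {q | ∃ x ∈ fracSet α v embℝ q.2, q.1 = embσ K α p₁ x}

/-- The Dumont–Thomas subtile `R_σ(a) ⊆ K_σ`: all limits of the partial sums of series
`Σ_{i ≥ 0} α^i Φ'(δ(pᵢ))` over labels `(pᵢ)` of left-infinite walks `⋯ → a₁ → a₀ = a`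
in the prefix automaton. -/
def subtile {n : ℕ} (word : Fin n → List (Fin n)) (α : K) (v : Fin n → K)
    (p₁ : InfinitePlace K) (a : Fin n) : Set (RepSpace K α p₁) :=
  {z | ∃ (st : ℕ → Fin n) (pre : ℕ → List (Fin n)),
    st 0 = a ∧
    (∀ i : ℕ, ∃ s : List (Fin n), word (st (i + 1)) = pre i ++ st i :: s) ∧
    Tendsto (fun N => ∑ i ∈ Finset.range N, embσ K α p₁ (α ^ i * dlt v (pre i)))
      atTop (nhds z)}

/-- The extension `T_ext⁻¹` acting on `K_σ × A`:
`T_ext⁻¹(γ,a) = ⋃_{b →p a} {(α⁻¹(γ + Φ'(δ(p))), b)}`. -/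
def Tinv {n : ℕ} (word : Fin n → List (Fin n)) (α : K) (v : Fin n → K)
    (p₁ : InfinitePlace K) (q : RepSpace K α p₁ × Fin n) : Set (RepSpace K α p₁ × Fin n) :=
  {r | ∃ p s : List (Fin n), word r.2 = p ++ q.2 :: s ∧
        r.1 = embσ K α p₁ α⁻¹ * (q.1 + embσ K α p₁ (dlt v p))}

/-- `T_ext⁻¹` acting elementwise on sets of pairs. -/
def TinvSet {n : ℕ} (word : Fin n → List (Fin n)) (α : K) (v : Fin n → K)
    (p₁ : InfinitePlace K) (S : Set (RepSpace K α p₁ × Fin n)) :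
    Set (RepSpace K α p₁ × Fin n) :=
  ⋃ q ∈ S, Tinv K word α v p₁ q

/-- The geometric property (F): `Γ = ⋃_{m ≥ 0} T_ext^{−m}(U)` with `U = {(0,a) : a ∈ A}`. -/
def PropertyF {n : ℕ} (word : Fin n → List (Fin n)) (α : K) (v : Fin n → K)
    (p₁ : InfinitePlace K) (embℝ : K →+* ℝ) : Prop :=
  transSet K α v p₁ embℝ =
    ⋃ m : ℕ, (TinvSet K word α v p₁)^[m] {q : RepSpace K α p₁ × Fin n | q.1 = 0}

variable {K}

/-- The strong coincidence condition. -/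
def StrongCoincidence {n : ℕ} (word : Fin n → List (Fin n)) : Prop :=
  ∀ b₁ b₂ : Fin n, ∃ (k : ℕ) (a : Fin n) (p₁ s₁ p₂ s₂ : List (Fin n)),
    (subApply word)^[k] [b₁] = p₁ ++ a :: s₁ ∧
    (subApply word)^[k] [b₂] = p₂ ++ a :: s₂ ∧
    ((∀ c : Fin n, p₁.count c = p₂.count c) ∨ (∀ c : Fin n, s₁.count c = s₂.count c))

/-- The element `Multiplicative.ofAdd (−m)` of `ℤₘ₀`; the valuation `v_𝔭(x) ≥ m` is
expressed as `v.valuation x ≤ zhat m`. -/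
def zhat (m : ℤ) : WithZero (Multiplicative ℤ) :=
  ((Multiplicative.ofAdd (-m) : Multiplicative ℤ) : WithZero (Multiplicative ℤ))

/-
Cutting `σ(b) = p a s` places the interval `[δ(p), δ(p) + δ(a))` inside `[0, δ(σ(b))) = α·[0, δ(b))`
under the real embedding, because the weights `vᵢ` are positive and `v` is an eigenvector. So
`x ↦ α⁻¹ (x + δ(p))` maps `Frac(σ,a)` into `Frac(σ,b)`, and the different cuts of `σ(b)` give disjoint
intervals, which makes the images of distinct points of the stepped surface disjoint.
-/

section Dlt

variable {n : ℕ} {K : Type*} [Field K]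

lemma dlt_append (v : Fin n → K) (p q : List (Fin n)) :
    dlt v (p ++ q) = dlt v p + dlt v q := by
  simp only [dlt, List.count_append, Nat.cast_add, add_mul, Finset.sum_add_distrib]

lemma dlt_cons (v : Fin n → K) (a : Fin n) (l : List (Fin n)) :
    dlt v (a :: l) = v a + dlt v l := by
  simp [dlt, List.count_cons, add_mul, Finset.sum_add_distrib, add_comm]

lemma map_dlt {L : Type*} [Field L] (f : K →+* L) (v : Fin n → K) (p : List (Fin n)) :
    f (dlt v p) = dlt (f ∘ v) p := by
  simp [dlt, map_sum]

lemma dlt_mem_VZmod (α : K) (v : Fin n → K) (p : List (Fin n)) : dlt v p ∈ VZmod α v := by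
  refine Submodule.sum_mem _ fun a _ => ?_
  have hva : v a ∈ VZmod α v := Submodule.subset_span ⟨a, 0, by rw [pow_zero, mul_one]⟩
  simpa only [zsmul_eq_mul, Int.cast_natCast] using (VZmod α v).smul_mem (p.count a : ℤ) hva

lemma inv_mul_mem_VZmod (α : K) (v : Fin n → K) {x : K} (hx : x ∈ VZmod α v) :
    α⁻¹ * x ∈ VZmod α v := by
  induction hx using Submodule.span_induction with
  | mem y hy =>
    obtain ⟨i, k, rfl⟩ := hy
    exact Submodule.subset_span ⟨i, k + 1, by ring⟩
  | zero => rw [mul_zero]; exact zero_mem _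
  | add y z _ _ hy hz => rw [mul_add]; exact add_mem hy hz
  | smul c y _ hy => rw [mul_smul_comm]; exact Submodule.smul_mem _ _ hy

end Dlt

lemma List.append_cons_eq_append_cons {β : Type*} {p₁ p₂ s₁ s₂ : List β} {a₁ a₂ : β}
    (h : p₁ ++ a₁ :: s₁ = p₂ ++ a₂ :: s₂) :
    (p₁ = p₂ ∧ a₁ = a₂) ∨ (∃ t, p₂ = p₁ ++ a₁ :: t) ∨ (∃ t, p₁ = p₂ ++ a₂ :: t) := by
  rcases List.append_eq_append_iff.mp h with ⟨l, rfl, hl⟩ | ⟨l, rfl, hl⟩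
  · rcases List.cons_eq_append_iff.mp hl with ⟨rfl, h'⟩ | ⟨t, rfl, -⟩
    · exact .inl ⟨by simp, (List.cons.inj h').1.symm⟩
    · exact .inr (.inl ⟨t, rfl⟩)
  · rcases List.cons_eq_append_iff.mp hl with ⟨rfl, h'⟩ | ⟨t, rfl, -⟩
    · exact .inl ⟨by simp, (List.cons.inj h').1⟩
    · exact .inr (.inr ⟨t, rfl⟩)

section OrderedWeights

variable {n : ℕ} {F : Type*} [Field F] [LinearOrder F] [IsStrictOrderedRing F]
  {v : Fin n → F}

lemma dlt_nonneg (hv : ∀ i, 0 ≤ v i) (p : List (Fin n)) : 0 ≤ dlt v p :=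
  Finset.sum_nonneg fun a _ => mul_nonneg (Nat.cast_nonneg _) (hv a)

lemma add_dlt_lt_dlt_append_cons (hv : ∀ i, 0 ≤ v i) {y : F} {a : Fin n} (hy : y < v a)
    (p s : List (Fin n)) : y + dlt v p < dlt v (p ++ a :: s) := by
  rw [dlt_append, dlt_cons]
  linarith [dlt_nonneg hv s]

lemma eq_of_add_dlt_eq_of_append_cons_eq (hv : ∀ i, 0 ≤ v i)
    {p₁ p₂ s₁ s₂ : List (Fin n)} {a₁ a₂ : Fin n} (hw : p₁ ++ a₁ :: s₁ = p₂ ++ a₂ :: s₂)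
    {y₁ y₂ : F} (hy₁ : y₁ ∈ Set.Ico 0 (v a₁)) (hy₂ : y₂ ∈ Set.Ico 0 (v a₂))
    (h : y₁ + dlt v p₁ = y₂ + dlt v p₂) : p₁ = p₂ ∧ a₁ = a₂ := by
  rcases List.append_cons_eq_append_cons hw with hp | ⟨t, rfl⟩ | ⟨t, rfl⟩
  · exact hp
  · linarith [add_dlt_lt_dlt_append_cons hv hy₁.2 p₁ t, hy₂.1]
  · linarith [add_dlt_lt_dlt_append_cons hv hy₂.2 p₂ t, hy₁.1]

end OrderedWeights

section FracSet

variable {n : ℕ} {K : Type*} [Field K] {α : K} {embℝ : K →+* ℝ} {v : Fin n → K}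

lemma inv_mul_add_dlt_mem_fracSet [NumberField K] {word : Fin n → List (Fin n)} (hα : 0 < embℝ α) (hv : IsPisotEigenvector word α embℝ v)
    {a b : Fin n} {p s : List (Fin n)} (hw : word b = p ++ a :: s) {x : K}
    (hx : x ∈ fracSet α v embℝ a) : α⁻¹ * (x + dlt v p) ∈ fracSet α v embℝ b := by
  obtain ⟨hxV, hx₀, hxa⟩ := hx
  have hpos : ∀ i, 0 ≤ (embℝ ∘ v) i := fun i => (hv.pos i).le
  have hcut : embℝ (x + dlt v p) < embℝ α * embℝ (v b) := by
    have heig : dlt v (word b) = α * v b := hv.left_eig b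
    rw [← map_mul, ← heig, hw, map_add, map_dlt, map_dlt]
    exact add_dlt_lt_dlt_append_cons hpos hxa p s
  refine ⟨inv_mul_mem_VZmod α v (add_mem hxV (dlt_mem_VZmod α v p)), ?_, ?_⟩
  · rw [map_mul, map_inv₀, map_add, map_dlt]
    exact mul_nonneg (inv_nonneg.2 hα.le) (add_nonneg hx₀ (dlt_nonneg hpos p))
  · rw [map_mul, map_inv₀, inv_mul_lt_iff₀ hα]
    exact hcut

lemma eq_of_embℝ_add_dlt_eq (hv : ∀ i, 0 < embℝ (v i))
    {p₁ p₂ s₁ s₂ : List (Fin n)} {a₁ a₂ : Fin n} (hw : p₁ ++ a₁ :: s₁ = p₂ ++ a₂ :: s₂)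
    {x₁ x₂ : K} (hx₁ : x₁ ∈ fracSet α v embℝ a₁) (hx₂ : x₂ ∈ fracSet α v embℝ a₂)
    (h : embℝ x₁ + embℝ (dlt v p₁) = embℝ x₂ + embℝ (dlt v p₂)) : p₁ = p₂ ∧ a₁ = a₂ := by
  rw [map_dlt, map_dlt] at h
  exact eq_of_add_dlt_eq_of_append_cons_eq (fun i => (hv i).le) hw hx₁.2 hx₂.2 h

end FracSet

theorem stmt7_general {n : ℕ} {K : Type*} [Field K] [NumberField K]
    (word : Fin n → List (Fin n)) (α : K) (p₁ : InfinitePlace K)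
    (embℝ : K →+* ℝ)
    (v : Fin n → K)
    (hσ : IsIrrPisot word α embℝ)
    (hv : IsPisotEigenvector word α embℝ v) :
    (∀ q ∈ steppedSurface K α v p₁ embℝ,
      TinvFull K word α v p₁ embℝ q ⊆ steppedSurface K α v p₁ embℝ) ∧
    (∀ q₁ ∈ steppedSurface K α v p₁ embℝ, ∀ q₂ ∈ steppedSurface K α v p₁ embℝ,
      q₁ ≠ q₂ →
      TinvFull K word α v p₁ embℝ q₁ ∩ TinvFull K word α v p₁ embℝ q₂ = ∅) := by
  set Φ := embα K α p₁ embℝ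
  have hα : 0 < embℝ α := one_pos.trans hσ.one_lt
  have hα₀ : α ≠ 0 := by rintro rfl; simp at hα
  have hΦα : IsUnit (Φ α⁻¹) := (inv_ne_zero hα₀).isUnit.map Φ
  refine ⟨?_, ?_⟩
  · rintro ⟨_, a⟩ ⟨x, hx, rfl⟩ ⟨_, b⟩ ⟨p, s, hw, rfl⟩
    exact ⟨_, inv_mul_add_dlt_mem_fracSet hα hv hw hx, by simp only [map_mul, map_add]⟩
  · rintro ⟨_, a₁⟩ ⟨x₁, hx₁, rfl⟩ ⟨_, a₂⟩ ⟨x₂, hx₂, rfl⟩ hne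
    refine Set.eq_empty_of_forall_notMem ?_
    rintro ⟨_, b⟩ ⟨⟨u₁, s₁, hw₁, hρ⟩, ⟨u₂, s₂, hw₂, rfl⟩⟩
    have hΦ : Φ x₁ + Φ (dlt v u₁) = Φ x₂ + Φ (dlt v u₂) := (hΦα.mul_left_cancel hρ).symm
    obtain ⟨rfl, rfl⟩ :=
      eq_of_embℝ_add_dlt_eq hv.pos (hw₁.symm.trans hw₂) hx₁ hx₂ (congrArg Prod.fst hΦ)
    exact hne (by rw [add_right_cancel hΦ])

/-- the stepped surface `S` is invariant under `T_ext⁻¹`: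
images of its elements stay in `S`, and distinct elements have disjoint images. -/
theorem stmt7 {n : ℕ} {K : Type*} [Field K] [NumberField K]
    (word : Fin n → List (Fin n)) (α : K) (p₁ : InfinitePlace K) (hp₁ : p₁.IsReal)
    (embℝ : K →+* ℝ) (hembℝ : embℝ = InfinitePlace.embedding_of_isReal hp₁)
    (v : Fin n → K)
    (hσ : IsIrrPisot word α embℝ)
    (hv : IsPisotEigenvector word α embℝ v) :
    (∀ q ∈ steppedSurface K α v p₁ embℝ,
      TinvFull K word α v p₁ embℝ q ⊆ steppedSurface K α v p₁ embℝ) ∧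
    (∀ q₁ ∈ steppedSurface K α v p₁ embℝ, ∀ q₂ ∈ steppedSurface K α v p₁ embℝ,
      q₁ ≠ q₂ →
      TinvFull K word α v p₁ embℝ q₁ ∩ TinvFull K word α v p₁ embℝ q₂ = ∅) :=
  stmt7_general word α p₁ embℝ v hσ hv
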